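/- Let H₂⁻¹ : [0,1] → [0, 1/2] be the inverse of the binary entropy function. Then for all s ∈ (0, 1], H₂⁻¹(s) ≥ s / (2 log₂(6/s)). -/

import Mathlib

/-- Binary entropy in bits (base-2 logarithm, with the convention `0 logb 0 = 0`). -/
noncomputable def binEnt2 (p : ℝ) : ℝ :=
  -(p * Real.logb 2 p) - (1 - p) * Real.logb 2 (1 - p)

/-- The inverse of the binary entropy function `H₂ : [0, 1/2] → [0, 1]`. -/
noncomputable def invBinEnt2 (s : ℝ) : ℝ :=
  sInf {p : ℝ | p ∈ Set.Icc (0:ℝ) (1/2) ∧ binEnt2 p = s}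

/-!
Put `q = s / (2 log₂ (6 / s))`; then `q ≤ 1/2`, so by monotonicity of `H₂` on `[0, 1/2]` it is
enough to show `H₂(q) ≤ s`. Bounding the `(1 - q)`-term of the entropy by `q` gives, in nats,
`H(q) ≤ q (1 - ln q)`, and `1 - ln q ≤ 2 ln (6 / s)` is an elementary estimate.
-/

open Real Set

lemma binEnt2_eq_binEntropy_div (p : ℝ) : binEnt2 p = binEntropy p / log 2 := by
  simp only [binEnt2, binEntropy, logb, log_inv]
  ring

lemma continuous_binEnt2 : Continuous binEnt2 := by
  simpa only [funext binEnt2_eq_binEntropy_div] using binEntropy_continuous.div_const _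

lemma binEnt2_zero : binEnt2 0 = 0 := by
  simp [binEnt2]

lemma binEnt2_half : binEnt2 (1 / 2) = 1 := by
  rw [binEnt2_eq_binEntropy_div, one_div, binEntropy_two_inv, div_self (log_pos one_lt_two).ne']

lemma strictMonoOn_binEnt2 : StrictMonoOn binEnt2 (Icc 0 (1 / 2)) := by
  intro x hx y hy hxy
  rw [binEnt2_eq_binEntropy_div, binEnt2_eq_binEntropy_div,
    div_lt_div_iff_of_pos_right (log_pos one_lt_two)]
  rw [one_div] at hx hy
  exact binEntropy_strictMonoOn hx hy hxy

lemma le_invBinEnt2_of_binEnt2_le {q s : ℝ} (hq : q ∈ Icc 0 (1 / 2)) (hs : s ∈ Icc 0 1)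
    (h : binEnt2 q ≤ s) : q ≤ invBinEnt2 s := by
  rw [← binEnt2_zero, ← binEnt2_half] at hs
  obtain ⟨p, hp, hps⟩ := intermediate_value_Icc (by norm_num) continuous_binEnt2.continuousOn hs
  refine le_csInf ⟨p, hp, hps⟩ ?_
  rintro p ⟨hp, rfl⟩
  exact (strictMonoOn_binEnt2.le_iff_le hq hp).mp h

lemma binEntropy_le_negMulLog_add_self {p : ℝ} (hp : p ≤ 1) :
    binEntropy p ≤ negMulLog p + p := by
  rw [binEntropy_eq_negMulLog_add_negMulLog_one_sub]
  linarith [negMulLog_le_one_sub_self (sub_nonneg.mpr hp)]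

/-- With `a = log (6 / s)` this reduces to `log a + 1 ≤ a + log (3 log 2)`, which holds since
`log a ≤ a - 1` and `3 log 2 ≥ 1`. -/
lemma one_sub_log_le_two_mul_log_six_div {s : ℝ} (hs : 0 < s) (ha : 0 < log (6 / s)) :
    1 - log (s * log 2 / (2 * log (6 / s))) ≤ 2 * log (6 / s) := by
  set a := log (6 / s)
  have hlog2 : 0 < log 2 := log_pos one_lt_two
  have hsplit : log (s * log 2 / (2 * a)) = log s + log (3 * log 2) - log 6 - log a := by
    rw [log_div (by positivity) (by positivity), log_mul hs.ne' hlog2.ne',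
      log_mul (by norm_num) ha.ne', log_mul (by norm_num) hlog2.ne',
      show (6 : ℝ) = 2 * 3 by norm_num, log_mul (by norm_num) (by norm_num)]
    ring
  have ha_eq : a = log 6 - log s := log_div (by norm_num) hs.ne'
  have h3 : 0 ≤ log (3 * log 2) := log_nonneg (by linarith [log_two_gt_d9])
  have hloga : log a ≤ a - 1 := log_le_sub_one_of_pos ha
  rw [hsplit]
  linarith

/-- Calabro: for all `s ∈ (0, 1]`, `H₂⁻¹(s) ≥ s / (2 log₂(6/s))`. -/
theorem invBinEnt2_ge (s : ℝ) (h0 : 0 < s) (h1 : s ≤ 1) :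
    s / (2 * Real.logb 2 (6 / s)) ≤ invBinEnt2 s := by
  have hlog2 : 0 < log 2 := log_pos one_lt_two
  have h6s : 2 ≤ 6 / s := by rw [le_div_iff₀ h0]; linarith
  have hb : 1 ≤ logb 2 (6 / s) := logb_self_eq_one one_lt_two ▸ logb_le_logb_of_le one_lt_two two_pos h6s
  set q := s / (2 * logb 2 (6 / s))
  have ha : 0 < log (6 / s) := log_pos (by linarith)
  have hq_eq : q = s * log 2 / (2 * log (6 / s)) := by
    simp only [q, logb]; field_simp
  have hq0 : 0 < q := by positivity
  have hq : q ≤ 1 / 2 := by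
    rw [div_le_iff₀ (by positivity)]; nlinarith
  refine le_invBinEnt2_of_binEnt2_le ⟨hq0.le, hq⟩ ⟨h0.le, h1⟩ ?_
  rw [binEnt2_eq_binEntropy_div, div_le_iff₀ hlog2]
  calc binEntropy q ≤ negMulLog q + q := binEntropy_le_negMulLog_add_self (by linarith)
    _ = q * (1 - log q) := by rw [negMulLog]; ring
    _ ≤ q * (2 * log (6 / s)) := by
      gcongr
      rw [hq_eq]; exact one_sub_log_le_two_mul_log_six_div h0 ha
    _ = s * log 2 := by rw [hq_eq]; field_simp
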